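/- Let (X, λ) be an approach space (a pre-approach space in which adh A is a contraction for every A ⊆ X). Then for every filter F on X: λ(F)(x) = ⨅_{B ∈ F^#} cl B(x), and adh_λ F = ⨅_{F ∈ F} cl F pointwise, where cl B = C(θ_B) = adh_λ B. In particular adh_λ F is a contraction for every filter F. -/

import Mathlib

/-!
`adh B` is a contraction above `θ_B`, and every contraction `g ≥ θ_B` has `limsup_U g = 1` along
each ultrafilter `U ∋ B`, whence `adh B ≤ g`; so `cl B = adh B`. For a filter `F` and
`a = ⨅_{s ∈ F} adh s (x)`: since `adh` turns finite unions into maxima, the sets whose complement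
has adherence `< a` at `x` form a filter meeting `F`, and an ultrafilter `U` finer than both has
`λ(U)(x) = ⨅_{B ∈ U} adh B (x) ≥ a`. Infima of contractions are contractions.
-/

open Filter Set
open scoped ENNReal

noncomputable section
attribute [local instance] Classical.propDecidable

instance : Fact ((0:ℝ) ≤ 1) := ⟨zero_le_one⟩

/-- The value quantale `V = [0,1]` with multiplication. -/
abbrev V := unitInterval

/-- Residuation `t ⊘ x` on `[0,1]`: `min (t/x) 1` if `x ≠ 0`, and `1` if `x = 0`. -/
def oslash (t x : V) : V :=
  if x = 0 then 1
  else ⟨min (t.1 / x.1) 1, ⟨le_min (div_nonneg t.2.1 x.2.1) zero_le_one, min_le_right _ _⟩⟩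

/-- The grill of a filter: sets meeting every member of the filter. -/
def grill {X : Type*} (F : Filter X) : Set (Set X) := {B | ∀ S ∈ F, (B ∩ S).Nonempty}

/-- `limsup` of a `V`-valued function along a family of sets. -/
def limsupF {X : Type*} (F : Set (Set X)) (f : X → V) : V := ⨅ s ∈ F, ⨆ t ∈ s, f t

/-- `liminf` of a `V`-valued function along a family of sets. -/
def liminfF {X : Type*} (F : Set (Set X)) (f : X → V) : V := ⨆ s ∈ F, ⨅ t ∈ s, f t

/-- A convergence approach space structure on `X`, valued in `V = [0,1]`:
`lam F x` measures how well `F` converges to `x` (1 = full convergence);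
finer filters converge better, and principal ultrafilters fully converge. -/
structure CAS (X : Type*) where
  lam : Filter X → X → V
  mono : ∀ ⦃F G : Filter X⦄, F ≤ G → lam G ≤ lam F
  centered : ∀ x : X, lam (pure x) x = 1

/-- The standard approach structure on `V`. -/
def lamV (F : Filter V) (v : V) : V := oslash v (⨆ A ∈ grill F, sInf A)

/-- `f : X → V` is a contraction into `(V, λ_V)` (characterized pointwise). -/
def Contr {X : Type*} (Λ : CAS X) (f : X → V) : Prop :=
  ∀ (F : Filter X) (x : X), Λ.lam F x ≤ oslash (f x) (limsupF F.sets f)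

/-- Indicator function of a set, valued in `V`. -/
def theta {X : Type*} (A : Set X) : X → V := fun x => if x ∈ A then 1 else 0

/-- The lower-hull operator: the smallest contraction above `f`. -/
def Cop {X : Type*} (Λ : CAS X) (f : X → V) : X → V :=
  sInf {g : X → V | Contr Λ g ∧ f ≤ g}

/-- The adherence function of a set `A`. -/
def adhSet {X : Type*} (Λ : CAS X) (A : Set X) : X → V :=
  fun x => ⨆ (U : Ultrafilter X) (_ : A ∈ U), Λ.lam U x

/-- The adherence function of a filter. -/
def adhFilter {X : Type*} (Λ : CAS X) (F : Filter X) : X → V :=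
  fun x => ⨆ (U : Ultrafilter X) (_ : (U : Filter X) ≤ F), Λ.lam U x

/-- Adherence in `(V, λ_V)` of a subset of `V`. -/
def adhV (A : Set V) (v : V) : V := ⨆ (U : Ultrafilter V) (_ : A ∈ U), lamV U v

lemma le_oslash_iff {v t r : V} : v ≤ oslash t r ↔ v * r ≤ t := by
  unfold oslash
  split_ifs with hr
  · simp [hr, unitInterval.le_one']
  · have hr : (0 : ℝ) < r := unitInterval.pos_iff_ne_zero.2 hr
    rw [← Subtype.coe_le_coe, ← Subtype.coe_le_coe]
    simp [le_div_iff₀ hr, v.2.2]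

section

variable {X : Type*} (Λ : CAS X)

lemma contr_iff_mul_le {f : X → V} :
    Contr Λ f ↔ ∀ (F : Filter X) (x : X), Λ.lam F x * limsupF F.sets f ≤ f x := by
  simp only [Contr, le_oslash_iff]

lemma limsupF_mono {S : Set (Set X)} {f g : X → V} (h : f ≤ g) :
    limsupF S f ≤ limsupF S g :=
  iInf₂_mono fun _ _ => iSup₂_mono fun t _ => h t

lemma contr_iInf {ι : Sort*} {f : ι → X → V} (hf : ∀ i, Contr Λ (f i)) :
    Contr Λ (fun x => ⨅ i, f i x) := by
  refine (contr_iff_mul_le Λ).2 fun F x => le_iInf fun i => ?_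
  calc Λ.lam F x * limsupF F.sets (fun x => ⨅ i, f i x)
      ≤ Λ.lam F x * limsupF F.sets (f i) :=
        mul_le_mul_right (limsupF_mono fun y => iInf_le _ i) _
    _ ≤ f i x := (contr_iff_mul_le Λ).1 (hf i) F x

lemma adhSet_mono {A B : Set X} (h : A ⊆ B) : adhSet Λ A ≤ adhSet Λ B := fun _ =>
  iSup₂_mono' fun U hU => ⟨U, mem_of_superset hU h, le_rfl⟩

@[simp]
lemma adhSet_empty (x : X) : adhSet Λ ∅ x = ⊥ := by
  simp [adhSet]

lemma adhSet_union (A B : Set X) (x : X) :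
    adhSet Λ (A ∪ B) x = adhSet Λ A x ⊔ adhSet Λ B x := by
  refine le_antisymm (iSup₂_le fun U hU => ?_)
    (sup_le (adhSet_mono Λ subset_union_left x) (adhSet_mono Λ subset_union_right x))
  rcases Ultrafilter.union_mem_iff.1 hU with hA | hB
  · exact le_sup_of_le_left (le_iSup₂_of_le U hA le_rfl)
  · exact le_sup_of_le_right (le_iSup₂_of_le U hB le_rfl)

lemma theta_le_adhSet (B : Set X) : theta B ≤ adhSet Λ B := by
  intro x
  by_cases hx : x ∈ B
  · exact le_iSup₂_of_le (pure x : Ultrafilter X) hx (by simp [theta, hx, Λ.centered x])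
  · simp [theta, hx]

lemma adhSet_le_of_contr {B : Set X} {g : X → V} (hg : Contr Λ g) (hB : theta B ≤ g) :
    adhSet Λ B ≤ g := by
  intro x
  refine iSup₂_le fun U hU => ?_
  have hone : limsupF (U : Filter X).sets g = 1 := by
    refine top_unique (le_iInf₂ fun s hs => ?_)
    obtain ⟨t, htB, hts⟩ := Ultrafilter.nonempty_of_mem (inter_mem hU hs)
    exact le_iSup₂_of_le t hts ((if_pos htB).symm.trans_le (hB t))
  simpa [hone] using (contr_iff_mul_le Λ).1 hg U x

lemma isLeast_adhSet {B : Set X} (hB : Contr Λ (adhSet Λ B)) :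
    IsLeast {g | Contr Λ g ∧ theta B ≤ g} (adhSet Λ B) :=
  ⟨⟨hB, theta_le_adhSet Λ B⟩, fun _ ⟨hg, hθ⟩ => adhSet_le_of_contr Λ hg hθ⟩

lemma cop_theta_eq_adhSet {B : Set X} (hB : Contr Λ (adhSet Λ B)) :
    Cop Λ (theta B) = adhSet Λ B :=
  (isLeast_adhSet Λ hB).isGLB.sInf_eq

lemma mem_grill_iff_frequently {F : Filter X} {B : Set X} :
    B ∈ grill F ↔ ∃ᶠ x in F, x ∈ B := by
  simp only [grill, frequently_iff, Set.Nonempty, mem_inter_iff, mem_ofPred_eq]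
  exact forall₂_congr fun _ _ => exists_congr fun _ => and_comm

def complAdhLtFilter (x : X) (a : V) (ha : ⊥ < a) : Filter X :=
  comk (fun C => adhSet Λ C x < a) (by simpa using ha)
    (fun _ ht _ hst => (adhSet_mono Λ hst x).trans_lt ht)
    (fun _ hs _ ht => (adhSet_union Λ _ _ x).trans_lt (max_lt hs ht))

def IsPreApproach : Prop :=
  ∀ (F : Filter X) (x : X), Λ.lam F x = ⨅ B ∈ grill F, adhSet Λ B x

variable {Λ}

lemma IsPreApproach.lam_ultrafilter_eq
    (hΛ : IsPreApproach Λ) (U : Ultrafilter X) (x : X) : Λ.lam U x = ⨅ B ∈ U, adhSet Λ B x := by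
  simp only [hΛ U x, mem_grill_iff_frequently, Ultrafilter.frequently_iff_eventually]
  rfl

lemma IsPreApproach.iInf_adhSet_le_adhFilter
    (hΛ : IsPreApproach Λ) (F : Filter X) (x : X) : ⨅ s ∈ F, adhSet Λ s x ≤ adhFilter Λ F x := by
  set a := ⨅ s ∈ F, adhSet Λ s x
  rcases eq_bot_or_bot_lt a with ha | ha
  · exact ha ▸ bot_le
  have hne : (F ⊓ complAdhLtFilter Λ x a ha).NeBot := by
    refine inf_neBot_iff.2 fun s hs C hC => ?_
    by_contra hdisj
    have hsub : s ⊆ Cᶜ := fun y hy hyC => hdisj ⟨y, hy, hyC⟩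
    have has : a ≤ adhSet Λ s x := iInf₂_le (f := fun s _ => adhSet Λ s x) s hs
    exact has.not_gt ((adhSet_mono Λ hsub x).trans_lt hC)
  obtain ⟨U, hU⟩ := exists_ultrafilter_le (F ⊓ complAdhLtFilter Λ x a ha)
  refine le_iSup₂_of_le U (hU.trans inf_le_left) ?_
  rw [hΛ.lam_ultrafilter_eq]
  refine le_iInf₂ fun B hB => not_lt.1 fun hlt => U.empty_notMem ?_
  have hBc : Bᶜ ∈ U := hU.trans inf_le_right (by simpa [complAdhLtFilter] using hlt)
  simpa using inter_mem hB hBc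

lemma IsPreApproach.adhFilter_eq_iInf_adhSet
    (hΛ : IsPreApproach Λ) (F : Filter X) : adhFilter Λ F = fun x => ⨅ s ∈ F, adhSet Λ s x :=
  funext fun x => le_antisymm
    (iSup₂_le fun U hU => le_iInf₂ fun _ hs => le_iSup₂_of_le U (hU hs) le_rfl)
    (hΛ.iInf_adhSet_le_adhFilter F x)

end

/-- in an approach space (a pre-approach space in which every
`adh A` is a contraction), `cl B = C(θ_B) = adh B`,
`λ(F)(x) = ⨅_{B ∈ F^#} cl B (x)`, `adh F = ⨅_{F ∈ F} cl F` pointwise, and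
`adh F` is a contraction for every filter `F`. -/
theorem stmt19 {X : Type*} (Λ : CAS X)
    (hpre : ∀ (F : Filter X) (x : X), Λ.lam F x = ⨅ B ∈ grill F, adhSet Λ B x)
    (hadh : ∀ A : Set X, Contr Λ (adhSet Λ A)) :
    (∀ B : Set X, Cop Λ (theta B) = adhSet Λ B) ∧
    (∀ (F : Filter X) (x : X), Λ.lam F x = ⨅ B ∈ grill F, Cop Λ (theta B) x) ∧
    (∀ (F : Filter X) (x : X), adhFilter Λ F x = ⨅ s ∈ F, Cop Λ (theta s) x) ∧
    (∀ F : Filter X, Contr Λ (adhFilter Λ F)) := by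
  have hcl : ∀ B : Set X, Cop Λ (theta B) = adhSet Λ B :=
    fun B => cop_theta_eq_adhSet Λ (hadh B)
  have hΛ : IsPreApproach Λ := hpre
  refine ⟨hcl, fun F x => ?_, fun F x => ?_, fun F => ?_⟩
  · simp only [hcl, hpre]
  · simp only [hcl, hΛ.adhFilter_eq_iInf_adhSet]
  · rw [hΛ.adhFilter_eq_iInf_adhSet]
    exact contr_iInf Λ fun s => contr_iInf Λ fun _ => hadh s
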